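/- For every integer n ≥ 1, the 1-subdivision K_n' of the complete graph K_n satisfies π(K_n') ≤ N² + N + N(N−1)/2, where N = ⌈n^{1/3}⌉; in particular π(K_n') ≤ (3/2)n^{2/3} + O(n^{1/3}). -/

import Mathlib

open SimpleGraph MeasureTheory Filter

/-! ### Subdivisions -/

/-- A witness that the graph `H` is a subdivision of the graph `G`:  `H` is obtained from `G`
by replacing each edge `ab` of `G` by a path between (the copies of) `a` and `b` whose internal
(division) vertices are new and pairwise distinct. -/
structure SubdivisionWitness {V : Type*} {W : Type*} (G : SimpleGraph V) (H : SimpleGraph W) where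
  emb : V ↪ W
  path : ∀ ⦃a b : V⦄, G.Adj a b → H.Walk (emb a) (emb b)
  path_isPath : ∀ ⦃a b : V⦄ (h : G.Adj a b), (path h).IsPath
  path_symm : ∀ ⦃a b : V⦄ (h : G.Adj a b), path h.symm = (path h).reverse
  internal_new : ∀ ⦃a b : V⦄ (h : G.Adj a b) (x : V),
    emb x ∈ (path h).support → x = a ∨ x = b
  internally_disjoint : ∀ ⦃a b a' b' : V⦄ (h : G.Adj a b) (h' : G.Adj a' b'),
    s(a, b) ≠ s(a', b') → ∀ w : W, w ∈ (path h).support → w ∈ (path h').support →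
      ∃ x : V, emb x = w
  vert_cover : ∀ w : W,
    (∃ x : V, emb x = w) ∨ ∃ (a b : V) (h : G.Adj a b), w ∈ (path h).support
  edge_cover : ∀ e ∈ H.edgeSet, ∃ (a b : V) (h : G.Adj a b), e ∈ (path h).edges

/-- `H` is a subdivision of `G`. -/
def IsSubdivision {V W : Type*} (G : SimpleGraph V) (H : SimpleGraph W) : Prop :=
  Nonempty (SubdivisionWitness G H)

/-- `H` is a `(≤ t)`-subdivision of `G`: a subdivision with at most `t` division vertices
per edge (i.e. each replacing path has length at most `t + 1`). -/
def IsLESubdivision {V W : Type*} (t : ℕ) (G : SimpleGraph V) (H : SimpleGraph W) : Prop :=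
  ∃ S : SubdivisionWitness G H, ∀ ⦃a b : V⦄ (h : G.Adj a b), (S.path h).length ≤ t + 1

/-- `H` is the `t`-subdivision of `G`: exactly `t` division vertices on each edge. -/
def IsExactSubdivision {V W : Type*} (t : ℕ) (G : SimpleGraph V) (H : SimpleGraph W) : Prop :=
  ∃ S : SubdivisionWitness G H, ∀ ⦃a b : V⦄ (h : G.Adj a b), (S.path h).length = t + 1

/-! ### Shallow topological minors and the top-grad -/

/-- `H` is a shallow topological minor of `G` at depth `d`:  some `(≤ 2d)`-subdivision of `H`
is isomorphic to a subgraph of `G`. -/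
def IsShallowTopMinor {W V : Type*} (d : ℕ) (H : SimpleGraph W) (G : SimpleGraph V) : Prop :=
  ∃ (m : ℕ) (S : SimpleGraph (Fin m)),
    IsLESubdivision (2 * d) H S ∧ ∃ f : S →g G, Function.Injective f

/-- The topological greatest reduced average density (top-grad) `∇̃_d(G)` of rank `d`:
the maximum of `‖H‖/|H|` over all shallow topological minors `H` of `G` at depth `d`
with at least one vertex. -/
noncomputable def topGrad {V : Type*} (d : ℕ) (G : SimpleGraph V) : ℝ :=
  sSup {q : ℝ | ∃ (m : ℕ) (H : SimpleGraph (Fin m)), 0 < m ∧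
    IsShallowTopMinor d H G ∧ q = (Nat.card H.edgeSet : ℝ) / m}

/-! ### Shallow minors, the grad, and bounded expansion -/

/-- `H` is a shallow minor of `G` at depth `d`: it is obtained from `G` by contracting
pairwise disjoint connected subgraphs (branch sets) of radius at most `d` and taking
a simple subgraph of the result. -/
def IsShallowMinor {W V : Type*} (d : ℕ) (H : SimpleGraph W) (G : SimpleGraph V) : Prop :=
  ∃ B : W → Set V,
    (∀ i, (B i).Nonempty) ∧
    (∀ i j, i ≠ j → Disjoint (B i) (B j)) ∧
    (∀ i : W, ∃ c : (B i), ∀ v : (B i), ∃ p : (G.induce (B i)).Walk c v, p.length ≤ d) ∧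
    (∀ i j : W, H.Adj i j → ∃ u ∈ B i, ∃ v ∈ B j, G.Adj u v)

/-- The greatest reduced average density (grad) `∇_d(G)` of rank `d`. -/
noncomputable def grad {V : Type*} (d : ℕ) (G : SimpleGraph V) : ℝ :=
  sSup {q : ℝ | ∃ (m : ℕ) (H : SimpleGraph (Fin m)), 0 < m ∧
    IsShallowMinor d H G ∧ q = (Nat.card H.edgeSet : ℝ) / m}

/-- A class of finite simple graphs, represented by graphs on `Fin n` for all `n`. -/
abbrev GraphClass := Set ((n : ℕ) × SimpleGraph (Fin n))

/-- A class of graphs has bounded expansion if `∇_d` is bounded on the class by a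
function of `d`. -/
def BoundedExpansion (C : GraphClass) : Prop :=
  ∃ f : ℕ → ℝ, ∀ G ∈ C, ∀ d : ℕ, grad d G.2 ≤ f d

/-! ### Graph parameters -/

/-- A graph parameter is isomorphism-invariant. -/
def IsoInvariant (α : ((n : ℕ) × SimpleGraph (Fin n)) → ℝ) : Prop :=
  ∀ G H : (n : ℕ) × SimpleGraph (Fin n), Nonempty (G.2 ≃g H.2) → α G = α H

/-- A graph parameter is strongly topological: `α(G)` and `α(H)` bound each other through a
fixed non-decreasing function, whenever `H` is a `(≤1)`-subdivision of `G`. -/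
def StronglyTopological (α : ((n : ℕ) × SimpleGraph (Fin n)) → ℝ) : Prop :=
  ∃ f : ℝ → ℝ, Monotone f ∧ ∀ G H : (n : ℕ) × SimpleGraph (Fin n),
    IsLESubdivision 1 G.2 H.2 → α G ≤ f (α H) ∧ α H ≤ f (α G)

/-- A graph parameter is monotone: it does not increase when passing to a subgraph. -/
def MonotoneParam (α : ((n : ℕ) × SimpleGraph (Fin n)) → ℝ) : Prop :=
  ∀ G H : (n : ℕ) × SimpleGraph (Fin n),
    (∃ f : H.2 →g G.2, Function.Injective f) → α H ≤ α G

/-- A graph parameter is degree-bound: every nonempty graph has a vertex of degree at most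
`f(α(G))` for some fixed function `f`. -/
def DegreeBound (α : ((n : ℕ) × SimpleGraph (Fin n)) → ℝ) : Prop :=
  ∃ f : ℝ → ℝ, ∀ G : (n : ℕ) × SimpleGraph (Fin n), 0 < G.1 →
    ∃ v : Fin G.1, (Nat.card (G.2.neighborSet v) : ℝ) ≤ f (α G)

/-! ### Queue and stack layouts -/

/-- A `k`-queue layout of `G` with respect to the linear order on `V`: an assignment of the
(potential) edges to `k` queues so that no two edges in a common queue are nested. -/
def IsQueueLayout {V : Type*} [LinearOrder V] (G : SimpleGraph V) (k : ℕ)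
    (q : Sym2 V → Fin k) : Prop :=
  ∀ ⦃a b c d : V⦄, G.Adj a b → G.Adj c d → a < b → c < d →
    q s(a, b) = q s(c, d) → ¬(a < c ∧ d < b)

/-- The signed queue function `Q`:  `Q(v,w) = q(vw)` if `v < w` and `Q(v,w) = -q(vw)`
if `w < v` (queues are numbered `1,…,k`). -/
def signedQueue {V : Type*} [LinearOrder V] {k : ℕ} (q : Sym2 V → Fin k) (v w : V) : ℤ :=
  if v < w then ((q s(v, w) : ℕ) : ℤ) + 1 else -(((q s(v, w) : ℕ) : ℤ) + 1)

/-- `G` admits a `k`-queue layout (for some vertex ordering). -/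
def HasQueueLayout {V : Type*} (G : SimpleGraph V) (k : ℕ) : Prop :=
  ∃ (ord : LinearOrder V) (q : Sym2 V → Fin k), @IsQueueLayout V ord G k q

/-- A `k`-stack layout of `G` with respect to the linear order on `V`: an assignment of the
(potential) edges to `k` stacks so that no two edges in a common stack cross. -/
def IsStackLayout {V : Type*} [LinearOrder V] (G : SimpleGraph V) (k : ℕ)
    (q : Sym2 V → Fin k) : Prop :=
  ∀ ⦃a b c d : V⦄, G.Adj a b → G.Adj c d → a < b → c < d →
    q s(a, b) = q s(c, d) → ¬(a < c ∧ c < b ∧ b < d)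

/-- `G` admits a `k`-stack layout (for some vertex ordering). -/
def HasStackLayout {V : Type*} (G : SimpleGraph V) (k : ℕ) : Prop :=
  ∃ (ord : LinearOrder V) (q : Sym2 V → Fin k), @IsStackLayout V ord G k q

/-! ### Contracting the components of a subgraph -/

/-- The equivalence relation on `V(G)` identifying the vertices in a common connected
component of the subgraph `F`. -/
def contractSetoid {V : Type*} {G : SimpleGraph V} (F : G.Subgraph) : Setoid V where
  r u v := u = v ∨ ∃ (hu : u ∈ F.verts) (hv : v ∈ F.verts),
    F.coe.Reachable ⟨u, hu⟩ ⟨v, hv⟩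
  iseqv := by
    refine ⟨fun x => Or.inl rfl, ?_, ?_⟩
    · rintro x y (rfl | ⟨hx, hy, h⟩)
      · exact Or.inl rfl
      · exact Or.inr ⟨hy, hx, h.symm⟩
    · rintro x y z (rfl | ⟨hx, hy, h⟩) hyz
      · exact hyz
      · rcases hyz with (rfl | ⟨hy', hz, h'⟩)
        · exact Or.inr ⟨hx, hy, h⟩
        · exact Or.inr ⟨hx, hz, h.trans h'⟩

/-- The simple graph obtained from `G` by contracting each connected component of the
subgraph `F` to a single vertex (deleting loops and parallel edges). -/
def contractGraph {V : Type*} {G : SimpleGraph V} (F : G.Subgraph) :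
    SimpleGraph (Quotient (contractSetoid F)) where
  Adj A B := A ≠ B ∧ ∃ u v : V, G.Adj u v ∧
    Quotient.mk (contractSetoid F) u = A ∧ Quotient.mk (contractSetoid F) v = B
  symm := by
    constructor
    rintro A B ⟨hne, u, v, h, hu, hv⟩
    exact ⟨hne.symm, v, u, h.symm, hv, hu⟩
  loopless := by
    constructor
    rintro A ⟨hne, -⟩
    exact hne rfl

/-! ### Non-repetitive and acyclic colourings -/

/-- A colouring `f` of `G` is non-repetitive if there is no path `v₀, …, v_{2s-1}` in `G`
(`s ≥ 1`, vertices pairwise distinct, consecutive vertices adjacent) with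
`f(v_i) = f(v_{i+s})` for all `i < s`. -/
def NonRepColoring {V α : Type*} (G : SimpleGraph V) (f : V → α) : Prop :=
  ∀ s : ℕ, 0 < s → ∀ v : ℕ → V,
    (∀ i, i < 2 * s → ∀ j, j < 2 * s → i ≠ j → v i ≠ v j) →
    (∀ i, i + 1 < 2 * s → G.Adj (v i) (v (i + 1))) →
    ¬(∀ i, i < s → f (v i) = f (v (i + s)))

/-- `π(G)`: the minimum number of colours in a non-repetitive colouring of `G`. -/
noncomputable def piNum {V : Type*} (G : SimpleGraph V) : ℕ :=
  sInf {k : ℕ | ∃ f : V → Fin k, NonRepColoring G f}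

/-- A proper colouring of `G` with no bichromatic cycle (every cycle receives at least
three colours). -/
def AcyclicColoring {V α : Type*} (G : SimpleGraph V) (f : V → α) : Prop :=
  (∀ u w : V, G.Adj u w → f u ≠ f w) ∧
  ∀ (u : V) (c : G.Walk u u), c.IsCycle →
    ∃ x ∈ c.support, ∃ y ∈ c.support, ∃ z ∈ c.support, f x ≠ f y ∧ f x ≠ f z ∧ f y ≠ f z

/-- `χₐ(G)`: the acyclic chromatic number of `G`. -/
noncomputable def chiA {V : Type*} (G : SimpleGraph V) : ℕ :=
  sInf {k : ℕ | ∃ f : V → Fin k, AcyclicColoring G f}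

/-! ### The Erdős–Rényi random graph `G(n, p)` -/

/-- The Erdős–Rényi measure: each potential edge (coordinate) is present independently with
probability `p` (truncated to `[0,1]`). -/
noncomputable def erdosRenyi (n : ℕ) (p : ℝ) : Measure (Sym2 (Fin n) → Bool) :=
  Measure.pi fun _ =>
    ((PMF.bernoulli (min (Real.toNNReal p) 1) (min_le_right _ _)).toMeasure)

/-- The simple graph on `Fin n` determined by an outcome `ω` of the edge indicators. -/
def graphOf {n : ℕ} (ω : Sym2 (Fin n) → Bool) : SimpleGraph (Fin n) where
  Adj u v := u ≠ v ∧ ω s(u, v) = true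
  symm := by
    constructor
    rintro u v ⟨hne, h⟩
    exact ⟨hne.symm, by rwa [Sym2.eq_swap]⟩
  loopless := by
    constructor
    rintro u ⟨hne, -⟩
    exact hne rfl

/-!
Write `n ≤ N² · N` and place the vertices of `K_n` injectively on the grid `[N²] × [N]`, a
vertex `v` at `(κ v, c v)`. A branch vertex `v` of `K_n'` gets the colour `κ v`; the division
vertex of `ab` gets the pair `{c a, c b}` if `κ a = κ b`, and otherwise the value of `c` at the
endpoint with the smaller `κ`. Branch and division vertices alternate along a path and have
disjoint palettes, so a repetitive path has length `4t` and, after reversal, starts at a branch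
vertex: it reads `x₀, (x₀x₁), x₁, (x₁x₂), …` with `κ xⱼ = κ x_{j+t}`. The repetition then
matches the division vertex `(x₀x₁)` with `(x_t x_{t+1})`, or for `t = 1` with the last vertex
`(x₁y)`, and the colours of these can only agree if two of the `x`'s (or `x₀` and `y`) coincide.
-/

section Repetitive

variable {V α β : Type*}

structure IsRepetitivePath (G : SimpleGraph V) (f : V → α) (s : ℕ) (v : ℕ → V) : Prop where
  pos : 0 < s
  injOn : ∀ i, i < 2 * s → ∀ j, j < 2 * s → i ≠ j → v i ≠ v j
  adj : ∀ i, i + 1 < 2 * s → G.Adj (v i) (v (i + 1))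
  rep : ∀ i, i < s → f (v i) = f (v (i + s))

variable {G : SimpleGraph V} {f : V → α} {s : ℕ} {v : ℕ → V}

lemma nonRepColoring_of_forall_not_isRepetitivePath (h : ∀ s v, ¬IsRepetitivePath G f s v) :
    NonRepColoring G f :=
  fun s hs v hinj hadj hrep => h s v ⟨hs, hinj, hadj, hrep⟩

lemma IsRepetitivePath.reverse (hv : IsRepetitivePath G f s v) :
    IsRepetitivePath G f s fun i => v (2 * s - 1 - i) where
  pos := hv.pos
  injOn i hi j hj hij := hv.injOn _ (by omega) _ (by omega) (by omega)
  adj i hi := by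
    have h := (hv.adj (2 * s - 1 - (i + 1)) (by omega)).symm
    rwa [show 2 * s - 1 - (i + 1) + 1 = 2 * s - 1 - i by omega] at h
  rep i hi := by
    have h := (hv.rep (s - 1 - i) (by omega)).symm
    rwa [show s - 1 - i + s = 2 * s - 1 - i by omega,
      show s - 1 - i = 2 * s - 1 - (i + s) by omega] at h

lemma NonRepColoring.comp_injective (hf : NonRepColoring G f) {e : α → β} (he : e.Injective) :
    NonRepColoring G (e ∘ f) :=
  fun s hs v hinj hadj hrep => hf s hs v hinj hadj fun i hi => he (hrep i hi)

lemma piNum_le_card [Fintype α] (hf : NonRepColoring G f) : piNum G ≤ Fintype.card α :=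
  Nat.sInf_le ⟨_, hf.comp_injective (Fintype.equivFin α).injective⟩

end Repetitive

lemma SimpleGraph.Walk.support_eq_of_length_eq_two {V : Type*} {G : SimpleGraph V} {u v : V}
    (p : G.Walk u v) (hp : p.length = 2) : p.support = [u, p.getVert 1, v] := by
  rcases p with _ | ⟨_, _ | ⟨_, _ | ⟨_, _⟩⟩⟩ <;> simp_all

lemma SimpleGraph.Walk.edges_eq_of_length_eq_two {V : Type*} {G : SimpleGraph V} {u v : V}
    (p : G.Walk u v) (hp : p.length = 2) : p.edges = [s(u, p.getVert 1), s(p.getVert 1, v)] := by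
  rcases p with _ | ⟨_, _ | ⟨_, _ | ⟨_, _⟩⟩⟩ <;> simp_all

-- The two ways in which a repetitive path of a 1-subdivision coloured by `κ` on branch vertices
-- and `g` on division vertices could close up: in a path `a b y`, and between edges `ab`, `a'b'`.
structure BreaksRepetitions {V α β : Type*} (G : SimpleGraph V) (κ : V → α) (g : Sym2 V → β) :
    Prop where
  cherry : ∀ ⦃a b y : V⦄, G.Adj a b → G.Adj b y → a ≠ y → κ a = κ b → g s(a, b) ≠ g s(b, y)
  matching : ∀ ⦃a b a' b' : V⦄, G.Adj a b → G.Adj a' b' → a ≠ a' → a ≠ b' → b ≠ b' →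
    κ a = κ a' → κ b = κ b' → g s(a, b) ≠ g s(a', b')

namespace SubdivisionWitness

variable {V W α β : Type*} {G : SimpleGraph V} {H : SimpleGraph W} (S : SubdivisionWitness G H)

def mid {a b : V} (h : G.Adj a b) : W := (S.path h).getVert 1

section OneSubdivision

variable {S} (hS : ∀ ⦃a b : V⦄ (h : G.Adj a b), (S.path h).length = 2)
include hS

lemma support_path {a b : V} (h : G.Adj a b) :
    (S.path h).support = [S.emb a, S.mid h, S.emb b] :=
  (S.path h).support_eq_of_length_eq_two (hS h)

lemma mid_ne_emb {a b : V} (h : G.Adj a b) (x : V) : S.mid h ≠ S.emb x := by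
  intro hx
  have hmem : S.emb x ∈ (S.path h).support := by simp [support_path hS, ← hx]
  have hnodup := (S.path_isPath h).support_nodup
  rw [support_path hS] at hnodup
  rcases S.internal_new h x hmem with rfl | rfl <;> simp_all

lemma mid_symm {a b : V} (h : G.Adj a b) : S.mid h.symm = S.mid h := by
  have hsupp := support_path hS h.symm
  rw [S.path_symm h, Walk.support_reverse, support_path hS] at hsupp
  simp only [List.reverse_cons, List.reverse_nil, List.nil_append, List.cons_append,
    List.cons.injEq] at hsupp
  exact hsupp.2.1.symm

lemma mid_eq_mid_iff {a b a' b' : V} (h : G.Adj a b) (h' : G.Adj a' b') :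
    S.mid h = S.mid h' ↔ s(a, b) = s(a', b') := by
  constructor
  · intro hm
    by_contra hne
    have hmem : S.mid h ∈ (S.path h).support := by simp [support_path hS]
    have hmem' : S.mid h ∈ (S.path h').support := by simp [support_path hS, hm]
    obtain ⟨x, hx⟩ := S.internally_disjoint h h' hne _ hmem hmem'
    exact mid_ne_emb hS h x hx.symm
  · rw [Sym2.eq_iff]
    rintro (⟨rfl, rfl⟩ | ⟨rfl, rfl⟩)
    · rfl
    · exact (mid_symm hS h).symm

lemma mem_range_emb_or_eq_mid (w : W) :
    w ∈ Set.range S.emb ∨ ∃ (a b : V) (h : G.Adj a b), w = S.mid h := by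
  obtain hw | ⟨a, b, h, hw⟩ := S.vert_cover w
  · exact Or.inl hw
  · rw [support_path hS] at hw
    simp only [List.mem_cons, List.not_mem_nil, or_false] at hw
    rcases hw with rfl | rfl | rfl
    · exact Or.inl ⟨a, rfl⟩
    · exact Or.inr ⟨a, b, h, rfl⟩
    · exact Or.inl ⟨b, rfl⟩

lemma exists_emb_mid_of_adj {u w : W} (huw : H.Adj u w) : ∃ (a b : V) (h : G.Adj a b),
    u = S.emb a ∧ w = S.mid h ∨ u = S.mid h ∧ w = S.emb a := by
  obtain ⟨a, b, h, he⟩ := S.edge_cover s(u, w) huw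
  rw [(S.path h).edges_eq_of_length_eq_two (hS h)] at he
  simp only [List.mem_cons, List.not_mem_nil, or_false, Sym2.eq_iff] at he
  rcases he with (⟨rfl, rfl⟩ | ⟨rfl, rfl⟩) | (⟨rfl, rfl⟩ | ⟨rfl, rfl⟩)
  · exact ⟨a, b, h, Or.inl ⟨rfl, rfl⟩⟩
  · exact ⟨a, b, h, Or.inr ⟨rfl, rfl⟩⟩
  · exact ⟨b, a, h.symm, Or.inr ⟨mid_symm hS h ▸ rfl, rfl⟩⟩
  · exact ⟨b, a, h.symm, Or.inl ⟨rfl, mid_symm hS h ▸ rfl⟩⟩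

lemma mem_range_emb_iff_not_of_adj {u w : W} (huw : H.Adj u w) :
    u ∈ Set.range S.emb ↔ w ∉ Set.range S.emb := by
  obtain ⟨a, b, h, ⟨rfl, rfl⟩ | ⟨rfl, rfl⟩⟩ := exists_emb_mid_of_adj hS huw
  · simpa using fun x => (mid_ne_emb hS h x).symm
  · simpa using fun x => (mid_ne_emb hS h x).symm

lemma eq_or_eq_of_adj_emb_mid {a b p : V} (h : G.Adj a b) (hadj : H.Adj (S.emb p) (S.mid h)) :
    p = a ∨ p = b := by
  obtain ⟨a', b', h', ⟨hp, hm⟩ | ⟨hp, -⟩⟩ := exists_emb_mid_of_adj hS hadj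
  · rw [S.emb.injective hp]
    rw [mid_eq_mid_iff hS, Sym2.eq_iff] at hm
    rcases hm with ⟨rfl, rfl⟩ | ⟨rfl, rfl⟩ <;> simp
  · exact absurd hp.symm (mid_ne_emb hS h' p)

lemma exists_eq_mid_of_adj {a : V} {w : W} (hadj : H.Adj (S.emb a) w)
    (hw : w ∉ Set.range S.emb) : ∃ b, ∃ h : G.Adj a b, w = S.mid h := by
  obtain ⟨a', b', h', ⟨ha, rfl⟩ | ⟨ha, -⟩⟩ := exists_emb_mid_of_adj hS hadj
  · obtain rfl := S.emb.injective ha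
    exact ⟨b', h', rfl⟩
  · exact absurd ha (mid_ne_emb hS h' a).symm

lemma exists_adj_eq_mid_of_adj_of_adj {a b : V} {w : W} (hab : a ≠ b)
    (ha : H.Adj (S.emb a) w) (hb : H.Adj w (S.emb b)) (hw : w ∉ Set.range S.emb) :
    ∃ h : G.Adj a b, w = S.mid h := by
  obtain ⟨b', h, rfl⟩ := exists_eq_mid_of_adj hS ha hw
  obtain rfl | rfl := eq_or_eq_of_adj_emb_mid hS h hb.symm
  · exact absurd rfl hab
  · exact ⟨h, rfl⟩

lemma mem_range_emb_iff_even {u : ℕ → W} {L : ℕ} (hu : ∀ i, i + 1 < L → H.Adj (u i) (u (i + 1))) :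
    ∀ i, i < L → (u i ∈ Set.range S.emb ↔ (Even i ↔ u 0 ∈ Set.range S.emb))
  | 0, _ => by simp
  | i + 1, hi => by
    have hstep := mem_range_emb_iff_not_of_adj hS (hu i hi)
    have hprev := mem_range_emb_iff_even hu i (by omega)
    rw [Nat.even_add_one]
    tauto

lemma exists_emb_eq_even_of_adj {u : ℕ → W} {L : ℕ}
    (hu : ∀ i, i + 1 < L → H.Adj (u i) (u (i + 1))) (h0 : u 0 ∈ Set.range S.emb) :
    ∃ X : ℕ → V, (∀ j, 2 * j < L → S.emb (X j) = u (2 * j)) ∧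
      ∀ j, 2 * j + 1 < L → u (2 * j + 1) ∉ Set.range S.emb := by
  have : Nonempty V := ⟨h0.choose⟩
  refine ⟨fun j => Function.invFun S.emb (u (2 * j)), fun j hj => ?_, fun j hj => ?_⟩
  · exact Function.invFun_eq
      ((mem_range_emb_iff_even hS hu _ hj).2 ⟨fun _ => h0, fun _ => even_two_mul j⟩)
  · rw [mem_range_emb_iff_even hS hu _ hj]
    simp [h0]

lemma exists_coloring (κ : V → α) (g : Sym2 V → β) :
    ∃ f : W → α ⊕ β, (∀ x, f (S.emb x) = .inl (κ x)) ∧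
      ∀ ⦃a b : V⦄ (h : G.Adj a b), f (S.mid h) = .inr (g s(a, b)) := by
  have : ∀ w, ∃ c : α ⊕ β, (∀ x, w = S.emb x → c = .inl (κ x)) ∧
      ∀ ⦃a b : V⦄ (h : G.Adj a b), w = S.mid h → c = .inr (g s(a, b)) := by
    intro w
    obtain ⟨x, rfl⟩ | ⟨a, b, h, rfl⟩ := mem_range_emb_or_eq_mid hS w
    · refine ⟨.inl (κ x), fun x' hx' => by rw [S.emb.injective hx'], fun a b h hx => ?_⟩
      exact absurd hx.symm (mid_ne_emb hS h x)
    · refine ⟨.inr (g s(a, b)), fun x hx => absurd hx (mid_ne_emb hS h x), fun a' b' h' hm => ?_⟩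
      rw [(mid_eq_mid_iff hS h h').mp hm]
  choose f hf_emb hf_mid using this
  exact ⟨f, fun x => hf_emb _ x rfl, fun a b h => hf_mid _ h rfl⟩

variable {κ : V → α} {g : Sym2 V → β} {f : W → α ⊕ β}
  (hf_emb : ∀ x, f (S.emb x) = .inl (κ x))
  (hf_mid : ∀ ⦃a b : V⦄ (h : G.Adj a b), f (S.mid h) = .inr (g s(a, b)))
include hf_emb hf_mid

lemma isLeft_iff_mem_range_emb (w : W) : (f w).isLeft ↔ w ∈ Set.range S.emb := by
  obtain ⟨x, rfl⟩ | ⟨a, b, h, rfl⟩ := mem_range_emb_or_eq_mid hS w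
  · simp [hf_emb]
  · simpa [hf_mid] using fun x => (mid_ne_emb hS h x).symm

lemma even_of_isRepetitivePath {s : ℕ} {v : ℕ → W} (hv : IsRepetitivePath H f s v) : Even s := by
  have hs := mem_range_emb_iff_even hS hv.adj s (by have := hv.pos; omega)
  have h0 := isLeft_iff_mem_range_emb hS hf_emb hf_mid (v 0)
  have h0s := isLeft_iff_mem_range_emb hS hf_emb hf_mid (v (0 + s))
  rw [← hv.rep 0 hv.pos, h0, zero_add] at h0s
  tauto

lemma not_isRepetitivePath_of_mem_range_emb (hg : BreaksRepetitions G κ g) {s : ℕ}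
    {v : ℕ → W} (hv : IsRepetitivePath H f s v) (h0 : v 0 ∈ Set.range S.emb) : False := by
  -- `v` reads `X 0, (X 0 X 1), X 1, …`, and `rep` matches `v 1` with `v (2 * t + 1)`.
  obtain ⟨t, rfl⟩ := even_of_isRepetitivePath hS hf_emb hf_mid hv
  have ht := hv.pos
  obtain ⟨X, hX, hodd⟩ := exists_emb_eq_even_of_adj hS hv.adj h0
  have hX_ne (j j' : ℕ) (hj : j < t + t) (hj' : j' < t + t) (hjj' : j ≠ j') : X j ≠ X j' :=
    fun he => hv.injOn (2 * j) (by omega) (2 * j') (by omega) (by omega) (by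
      rw [← hX j (by omega), ← hX j' (by omega), he])
  have hκ (j : ℕ) (hj : j < t) : κ (X j) = κ (X (j + t)) := by
    have hrep := hv.rep (2 * j) (by omega)
    rwa [← hX j (by omega), show 2 * j + (t + t) = 2 * (j + t) by omega, ← hX (j + t) (by omega),
      hf_emb, hf_emb, Sum.inl.injEq] at hrep
  have hedge (j : ℕ) (hj : j + 1 < t + t) :
      ∃ h : G.Adj (X j) (X (j + 1)), v (2 * j + 1) = S.mid h := by
    refine exists_adj_eq_mid_of_adj_of_adj hS (hX_ne j (j + 1) (by omega) hj (by omega)) ?_ ?_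
      (hodd j (by omega))
    · rw [hX j (by omega)]
      exact hv.adj _ (by omega)
    · rw [hX (j + 1) (by omega)]
      exact hv.adj _ (by omega)
  have hcolor : ∀ ⦃y : V⦄ (h : G.Adj (X t) y), v (2 * t + 1) = S.mid h →
      g s(X 0, X 1) = g s(X t, y) := by
    intro y h hy
    obtain ⟨h01, h1⟩ := hedge 0 (by omega)
    have hrep := hv.rep 1 (by omega)
    rwa [show 1 + (t + t) = 2 * t + 1 by omega, hy, h1, hf_mid, hf_mid, Sum.inr.injEq] at hrep
  obtain rfl | ht2 : t = 1 ∨ 2 ≤ t := by omega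
  · obtain ⟨y, hy, hvy⟩ := exists_eq_mid_of_adj hS (hX 1 (by omega) ▸ hv.adj 2 (by omega))
      (hodd 1 (by omega))
    obtain ⟨h01, h1⟩ := hedge 0 (by omega)
    refine hg.cherry h01 hy (fun hy0 => ?_) (hκ 0 (by omega)) (hcolor hy hvy)
    subst hy0
    refine hv.injOn 3 (by omega) 1 (by omega) (by omega) ?_
    rw [hvy, h1, mid_eq_mid_iff hS, Sym2.eq_swap]
  · obtain ⟨h01, -⟩ := hedge 0 (by omega)
    obtain ⟨htt, hvt⟩ := hedge t (by omega)
    exact hg.matching h01 htt (hX_ne 0 t (by omega) (by omega) (by omega))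
      (hX_ne 0 (t + 1) (by omega) (by omega) (by omega))
      (hX_ne 1 (t + 1) (by omega) (by omega) (by omega)) (by simpa using hκ 0 (by omega))
      (by simpa [add_comm] using hκ 1 (by omega))
      (hcolor htt hvt)

theorem nonRepColoring (hg : BreaksRepetitions G κ g) : NonRepColoring H f := by
  refine nonRepColoring_of_forall_not_isRepetitivePath fun s v hv => ?_
  by_cases h0 : v 0 ∈ Set.range S.emb
  · exact not_isRepetitivePath_of_mem_range_emb hS hf_emb hf_mid hg hv h0
  · refine not_isRepetitivePath_of_mem_range_emb hS hf_emb hf_mid hg hv.reverse ?_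
    have hlast := mem_range_emb_iff_even hS hv.adj (2 * s - 1) (by have := hv.pos; omega)
    have hodd : ¬Even (2 * s - 1) := by
      rw [Nat.not_even_iff_odd]
      exact ⟨s - 1, by have := hv.pos; omega⟩
    simp only [Nat.sub_zero]
    tauto

end OneSubdivision

end SubdivisionWitness

section GridEdgeColor

variable {V α γ : Type*} [LinearOrder α] [DecidableEq γ] (κ : V → α) (c : V → γ)

-- With `v` placed at `(κ v, c v)`, an edge inside a row gets the pair of columns of its ends,
-- any other edge the column of its end in the lower row.
def gridEdgeColor : Sym2 V → γ ⊕ {p : Sym2 γ // ¬p.IsDiag} :=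
  Sym2.lift ⟨fun a b => if h : κ a = κ b ∧ c a ≠ c b then .inr ⟨s(c a, c b), by simpa using h.2⟩
    else .inl (if κ a < κ b then c a else c b), fun a b => by
      by_cases hκ : κ a = κ b
      · by_cases hc : c a = c b
        · simp [hκ, hc]
        · simp [hκ, hc, Ne.symm hc, Sym2.eq_swap]
      · rcases lt_or_gt_of_ne hκ with hlt | hlt <;> simp [hκ, Ne.symm hκ, hlt, hlt.not_gt]⟩

lemma gridEdgeColor_mk (a b : V) : gridEdgeColor κ c s(a, b) =
    if h : κ a = κ b ∧ c a ≠ c b then .inr ⟨s(c a, c b), by simpa using h.2⟩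
    else .inl (if κ a < κ b then c a else c b) :=
  rfl

lemma breaksRepetitions_gridEdgeColor (G : SimpleGraph V)
    (hinj : Function.Injective fun v => (κ v, c v)) :
    BreaksRepetitions G κ (gridEdgeColor κ c) := by
  have hinj' {x y : V} (hκ : κ x = κ y) (hc : c x = c y) : x = y := hinj (Prod.ext hκ hc)
  constructor
  · intro a b y hab hby hay hκ
    have hc : c a ≠ c b := fun hc => hab.ne (hinj' hκ hc)
    rw [gridEdgeColor_mk, gridEdgeColor_mk, dif_pos ⟨hκ, hc⟩]
    split_ifs with hκ'
    · simp only [ne_eq, Sum.inr.injEq, Subtype.mk.injEq, Sym2.eq_iff, not_or]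
      exact ⟨fun h => hc h.1, fun h => hay (hinj' (hκ.trans hκ'.1) h.1)⟩
    all_goals simp
  · intro a b a' b' hab ha'b' haa' hab' hbb' hκa hκb
    rw [gridEdgeColor_mk, gridEdgeColor_mk, ← hκa, ← hκb]
    by_cases hκ : κ a = κ b
    · have hc : c a ≠ c b := fun hc => hab.ne (hinj' hκ hc)
      have hc' : c a' ≠ c b' := fun hc => ha'b'.ne (hinj' (hκa ▸ hκb ▸ hκ) hc)
      rw [dif_pos ⟨hκ, hc⟩, dif_pos ⟨hκ, hc'⟩]
      simp only [ne_eq, Sum.inr.injEq, Subtype.mk.injEq, Sym2.eq_iff, not_or]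
      exact ⟨fun h => haa' (hinj' hκa h.1), fun h => hab' (hinj' (hκ.trans hκb) h.1)⟩
    · rw [dif_neg fun h => hκ h.1, dif_neg fun h => hκ h.1, ne_eq, Sum.inl.injEq]
      split_ifs
      · exact fun hca => haa' (hinj' hκa hca)
      · exact fun hcb => hbb' (hinj' hκb hcb)

end GridEdgeColor

theorem piNum_le_of_isExactSubdivision_one {V W : Type*} [Fintype V] {G : SimpleGraph V}
    {H : SimpleGraph W} {a b : ℕ} (hV : Fintype.card V ≤ a * b)
    (hH : IsExactSubdivision 1 G H) : piNum H ≤ a + b + b.choose 2 := by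
  obtain ⟨S, hS⟩ := hH
  obtain ⟨e⟩ := Function.Embedding.nonempty_of_card_le (β := Fin a × Fin b) (by simpa using hV)
  obtain ⟨f, hf_emb, hf_mid⟩ := S.exists_coloring hS (fun v => (e v).1)
    (gridEdgeColor (fun v => (e v).1) fun v => (e v).2)
  have hf := S.nonRepColoring hS hf_emb hf_mid
    (breaksRepetitions_gridEdgeColor _ _ G e.injective)
  simpa only [Fintype.card_sum, Fintype.card_fin, Sym2.card_subtype_not_diag, add_assoc]
    using piNum_le_card hf

lemma le_ceil_rpow_one_third_pow_three (n : ℕ) : n ≤ ⌈(n : ℝ) ^ ((1 : ℝ) / 3)⌉₊ ^ 3 := by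
  have hcube : ((n : ℝ) ^ ((1 : ℝ) / 3)) ^ 3 = n := by
    rw [← Real.rpow_natCast, ← Real.rpow_mul n.cast_nonneg]
    norm_num
  have : (n : ℝ) ≤ (⌈(n : ℝ) ^ ((1 : ℝ) / 3)⌉₊ : ℝ) ^ 3 :=
    calc (n : ℝ) = ((n : ℝ) ^ ((1 : ℝ) / 3)) ^ 3 := hcube.symm
      _ ≤ _ := pow_le_pow_left₀ (by positivity) (Nat.le_ceil _) 3
  exact_mod_cast this

lemma cast_ceil_sq_add_ceil_add_pairs_le {a : ℝ} (ha : 1 ≤ a) :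
    ((⌈a⌉₊ ^ 2 + ⌈a⌉₊ + ⌈a⌉₊ * (⌈a⌉₊ - 1) / 2 : ℕ) : ℝ) ≤ 3 / 2 * a ^ 2 + 7 * a := by
  set N := ⌈a⌉₊
  have hN : (N : ℝ) ≤ a + 1 := (Nat.ceil_lt_add_one (by positivity)).le
  have hN2 : (N : ℝ) ^ 2 ≤ (a + 1) ^ 2 := pow_le_pow_left₀ (by positivity) hN 2
  have hpairs : ((N * (N - 1) / 2 : ℕ) : ℝ) ≤ N ^ 2 / 2 := by
    refine Nat.cast_div_le.trans ?_
    rw [sq, Nat.cast_ofNat]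
    gcongr
    exact_mod_cast Nat.mul_le_mul_left N (Nat.sub_le N 1)
  push_cast
  nlinarith

/-- For every `n ≥ 1`, the `1`-subdivision `K_n'` of the complete graph
`K_n` satisfies `π(K_n') ≤ N² + N + N(N−1)/2` where `N = ⌈n^{1/3}⌉`; in particular
`π(K_n') ≤ (3/2)·n^{2/3} + O(n^{1/3})`. -/
theorem stmt_18 :
    (∀ (n : ℕ), 1 ≤ n → ∀ (W : Type) [Fintype W] (H : SimpleGraph W),
      IsExactSubdivision 1 (completeGraph (Fin n)) H →
      piNum H ≤ (⌈(n : ℝ) ^ ((1 : ℝ) / 3)⌉₊) ^ 2 + ⌈(n : ℝ) ^ ((1 : ℝ) / 3)⌉₊ +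
        ⌈(n : ℝ) ^ ((1 : ℝ) / 3)⌉₊ * (⌈(n : ℝ) ^ ((1 : ℝ) / 3)⌉₊ - 1) / 2) ∧
    ∃ C : ℝ, ∀ (n : ℕ), 1 ≤ n → ∀ (W : Type) [Fintype W] (H : SimpleGraph W),
      IsExactSubdivision 1 (completeGraph (Fin n)) H →
      (piNum H : ℝ) ≤ 3 / 2 * (n : ℝ) ^ ((2 : ℝ) / 3) + C * (n : ℝ) ^ ((1 : ℝ) / 3) := by
  have hmain (n : ℕ) {W : Type} (H : SimpleGraph W)
      (hH : IsExactSubdivision 1 (completeGraph (Fin n)) H) :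
      piNum H ≤ (⌈(n : ℝ) ^ ((1 : ℝ) / 3)⌉₊) ^ 2 + ⌈(n : ℝ) ^ ((1 : ℝ) / 3)⌉₊ +
        ⌈(n : ℝ) ^ ((1 : ℝ) / 3)⌉₊ * (⌈(n : ℝ) ^ ((1 : ℝ) / 3)⌉₊ - 1) / 2 := by
    rw [← Nat.choose_two_right]
    refine piNum_le_of_isExactSubdivision_one ?_ hH
    simpa [← pow_succ] using le_ceil_rpow_one_third_pow_three n
  refine ⟨fun n _ W _ H hH => hmain n H hH, 7, fun n hn W _ H hH => ?_⟩
  have ha : 1 ≤ (n : ℝ) ^ ((1 : ℝ) / 3) := Real.one_le_rpow (by exact_mod_cast hn) (by norm_num)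
  have hsq : (n : ℝ) ^ ((2 : ℝ) / 3) = ((n : ℝ) ^ ((1 : ℝ) / 3)) ^ 2 := by
    rw [← Real.rpow_natCast, ← Real.rpow_mul n.cast_nonneg]
    norm_num
  rw [hsq]
  exact (Nat.cast_le.mpr (hmain n H hH)).trans (cast_ceil_sq_add_ceil_add_pairs_le ha)
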